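/- Let V and W be finite-dimensional real vector spaces and φ : V → W a linear map. If L ⊆ 𝕋W = W × W* is a Lagrangian subspace with respect to the pairing ⟨(u,ξ),(v,η)⟩ = ξ(v) + η(u), then the backward image φ^!(L) := {(u, η ∘ φ) : u ∈ V, η ∈ W*, (φ(u), η) ∈ L} is a Lagrangian subspace of 𝕋V = V × V*. -/

import Mathlib

open Module

variable {V W : Type*} [AddCommGroup V] [Module ℝ V] [AddCommGroup W] [Module ℝ W]

/-- The canonical symmetric pairing on the generalized tangent space `𝕋V = V × V*`:
`⟨(u,ξ),(v,η)⟩ = ξ(v) + η(u)`. -/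
noncomputable def gpair : (V × Module.Dual ℝ V) →ₗ[ℝ] (V × Module.Dual ℝ V) →ₗ[ℝ] ℝ :=
  LinearMap.mk₂ ℝ (fun a b => a.2 b.1 + b.2 a.1)
    (fun a a' b => by
      simp only [Prod.fst_add, Prod.snd_add, LinearMap.add_apply, map_add]; ring)
    (fun r a b => by
      simp only [Prod.smul_fst, Prod.smul_snd, LinearMap.smul_apply, map_smul,
        smul_eq_mul]; ring)
    (fun a b b' => by
      simp only [Prod.fst_add, Prod.snd_add, LinearMap.add_apply, map_add]; ring)
    (fun r a b => by
      simp only [Prod.smul_fst, Prod.smul_snd, LinearMap.smul_apply, map_smul,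
        smul_eq_mul]; ring)

/-- Orthogonal complement with respect to the canonical pairing on `𝕋V`. -/
noncomputable def gperp (S : Submodule ℝ (V × Module.Dual ℝ V)) :
    Submodule ℝ (V × Module.Dual ℝ V) where
  carrier := {a | ∀ b ∈ S, gpair a b = 0}
  add_mem' := by
    intro a b ha hb c hc
    rw [map_add, LinearMap.add_apply, ha c hc, hb c hc, add_zero]
  zero_mem' := by
    intro c hc
    rw [map_zero, LinearMap.zero_apply]
  smul_mem' := by
    intro r a ha c hc
    rw [map_smul, LinearMap.smul_apply, ha c hc, smul_zero]

/-- A subspace of `𝕋V` is Lagrangian if it equals its own orthogonal complement. -/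
def IsLagrangian (L : Submodule ℝ (V × Module.Dual ℝ V)) : Prop :=
  gperp L = L

/-- A linear map `π : V* → V` is skew-symmetric. -/
def IsSkew (π : Module.Dual ℝ V →ₗ[ℝ] V) : Prop :=
  ∀ ξ η : Module.Dual ℝ V, η (π ξ) = -(ξ (π η))

/-- The tangent product `L ⋆ R = {(u, ξ+η) : (u,ξ) ∈ L, (u,η) ∈ R}`. -/
def tanProd (L R : Submodule ℝ (V × Module.Dual ℝ V)) :
    Submodule ℝ (V × Module.Dual ℝ V) where
  carrier := {a | ∃ ξ η : Module.Dual ℝ V, (a.1, ξ) ∈ L ∧ (a.1, η) ∈ R ∧ a.2 = ξ + η}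
  add_mem' := by
    rintro a b ⟨ξ, η, h1, h2, h3⟩ ⟨ξ', η', h1', h2', h3'⟩
    refine ⟨ξ + ξ', η + η', ?_, ?_, ?_⟩
    · simpa [Prod.fst_add] using L.add_mem h1 h1'
    · simpa [Prod.fst_add] using R.add_mem h2 h2'
    · simp only [Prod.snd_add, h3, h3']; abel
  zero_mem' := ⟨0, 0, by convert L.zero_mem using 1 <;> simp [Prod.ext_iff], by convert R.zero_mem using 1 <;> simp [Prod.ext_iff], by simp⟩
  smul_mem' := by
    rintro r a ⟨ξ, η, h1, h2, h3⟩
    refine ⟨r • ξ, r • η, ?_, ?_, ?_⟩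
    · simpa [Prod.smul_fst] using L.smul_mem r h1
    · simpa [Prod.smul_fst] using R.smul_mem r h2
    · simp only [Prod.smul_snd, h3, smul_add]

/-- The cotangent product `L ⊛ R = {(u+v, ξ) : (u,ξ) ∈ L, (v,ξ) ∈ R}`. -/
def cotProd (L R : Submodule ℝ (V × Module.Dual ℝ V)) :
    Submodule ℝ (V × Module.Dual ℝ V) where
  carrier := {a | ∃ u v : V, (u, a.2) ∈ L ∧ (v, a.2) ∈ R ∧ a.1 = u + v}
  add_mem' := by
    rintro a b ⟨u, v, h1, h2, h3⟩ ⟨u', v', h1', h2', h3'⟩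
    refine ⟨u + u', v + v', ?_, ?_, ?_⟩
    · simpa [Prod.snd_add] using L.add_mem h1 h1'
    · simpa [Prod.snd_add] using R.add_mem h2 h2'
    · simp only [Prod.fst_add, h3, h3']; abel
  zero_mem' := ⟨0, 0, by convert L.zero_mem using 1 <;> simp [Prod.ext_iff], by convert R.zero_mem using 1 <;> simp [Prod.ext_iff], by simp⟩
  smul_mem' := by
    rintro r a ⟨u, v, h1, h2, h3⟩
    refine ⟨r • u, r • v, ?_, ?_, ?_⟩
    · simpa [Prod.smul_snd] using L.smul_mem r h1
    · simpa [Prod.smul_snd] using R.smul_mem r h2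
    · simp only [Prod.smul_fst, h3, smul_add]

/-- The backward image `φ^!(L) = {(u, η ∘ φ) : (φ(u), η) ∈ L}`. -/
def back (φ : V →ₗ[ℝ] W) (L : Submodule ℝ (W × Module.Dual ℝ W)) :
    Submodule ℝ (V × Module.Dual ℝ V) where
  carrier := {a | ∃ η : Module.Dual ℝ W, (φ a.1, η) ∈ L ∧ a.2 = η.comp φ}
  add_mem' := by
    rintro a b ⟨η, h1, h2⟩ ⟨η', h1', h2'⟩
    refine ⟨η + η', ?_, ?_⟩
    · simpa [Prod.fst_add, map_add] using L.add_mem h1 h1'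
    · simp only [Prod.snd_add, h2, h2', LinearMap.add_comp]
  zero_mem' := ⟨0, by convert L.zero_mem using 1 <;> simp [Prod.ext_iff], by simp⟩
  smul_mem' := by
    rintro r a ⟨η, h1, h2⟩
    refine ⟨r • η, ?_, ?_⟩
    · simpa [Prod.smul_fst, map_smul] using L.smul_mem r h1
    · simp only [Prod.smul_snd, h2, LinearMap.smul_comp]

/-- The forward image `φ_!(L) = {(φ(u), η) : (u, η ∘ φ) ∈ L}`. -/
def fwd (φ : V →ₗ[ℝ] W) (L : Submodule ℝ (V × Module.Dual ℝ V)) :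
    Submodule ℝ (W × Module.Dual ℝ W) where
  carrier := {b | ∃ u : V, φ u = b.1 ∧ (u, b.2.comp φ) ∈ L}
  add_mem' := by
    rintro a b ⟨u, h1, h2⟩ ⟨u', h1', h2'⟩
    refine ⟨u + u', ?_, ?_⟩
    · simp only [map_add, h1, h1', Prod.fst_add]
    · have := L.add_mem h2 h2'
      simpa [Prod.snd_add, LinearMap.add_comp] using this
  zero_mem' := ⟨0, by simp, by convert L.zero_mem using 1 <;> simp [Prod.ext_iff]⟩
  smul_mem' := by
    rintro r a ⟨u, h1, h2⟩
    refine ⟨r • u, ?_, ?_⟩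
    · simp only [map_smul, h1, Prod.smul_fst]
    · have := L.smul_mem r h2
      simpa [Prod.smul_snd, LinearMap.smul_comp] using this

/-- The graph `Gr(π) = {(π(ξ), ξ) : ξ ∈ V*}` of a map `π : V* → V`. -/
def gr (π : Module.Dual ℝ V →ₗ[ℝ] V) : Submodule ℝ (V × Module.Dual ℝ V) where
  carrier := {a | π a.2 = a.1}
  add_mem' := by
    intro a b ha hb
    simp only [Set.mem_setOf_eq, Prod.fst_add, Prod.snd_add, map_add] at *
    rw [ha, hb]
  zero_mem' := by simp
  smul_mem' := by
    intro r a ha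
    simp only [Set.mem_setOf_eq, Prod.smul_fst, Prod.smul_snd, map_smul] at *
    rw [ha]

/-!
Pairings pull back along `φ`, so `φ^!(L)` is isotropic. For coisotropy let `P ⊆ W` be the
projection of `L`; since `L` is Lagrangian, `L ∩ W* = P°`. If `(v, α)` is orthogonal to `φ^!(L)`,
pairing it with `(0, η ∘ φ)` for `η ∈ P°` gives `φ v ∈ P°° = P`, so `(φ v, η₀) ∈ L` for some `η₀`.
Then `α - η₀ ∘ φ` annihilates `φ⁻¹(P)`, hence equals `ζ ∘ φ` with `ζ ∈ P°`, and
`(v, α) = (v, (η₀ + ζ) ∘ φ)` with `(φ v, η₀ + ζ) ∈ L`.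
-/

open Submodule LinearMap

theorem Subspace.dualAnnihilator_comap_eq_map_dualMap {K V₁ V₂ : Type*} [Field K]
    [AddCommGroup V₁] [Module K V₁] [AddCommGroup V₂] [Module K V₂]
    (f : V₁ →ₗ[K] V₂) (P : Subspace K V₂) :
    (P.comap f).dualAnnihilator = P.dualAnnihilator.map f.dualMap :=
  calc (P.comap f).dualAnnihilator = (ker (P.mkQ ∘ₗ f)).dualAnnihilator := by
        rw [ker_comp, ker_mkQ]
    _ = range (P.mkQ ∘ₗ f).dualMap := (range_dualMap_eq_dualAnnihilator_ker _).symm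
    _ = (range P.mkQ.dualMap).map f.dualMap := by rw [← dualMap_comp_dualMap, range_comp]
    _ = P.dualAnnihilator.map f.dualMap := by rw [range_dualMap_eq_dualAnnihilator_ker, ker_mkQ]

@[simp]
theorem gpair_apply (a b : V × Dual ℝ V) : gpair a b = a.2 b.1 + b.2 a.1 := rfl

theorem mem_gperp {S : Submodule ℝ (V × Dual ℝ V)} {a : V × Dual ℝ V} :
    a ∈ gperp S ↔ ∀ b ∈ S, gpair a b = 0 := Iff.rfl

theorem gpair_comp (φ : V →ₗ[ℝ] W) (u u' : V) (η η' : Dual ℝ W) :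
    gpair (u, η ∘ₗ φ) (u', η' ∘ₗ φ) = gpair (φ u, η) (φ u', η') := rfl

namespace IsLagrangian

variable {L : Submodule ℝ (V × Dual ℝ V)}

theorem gpair_eq_zero (hL : IsLagrangian L) {a b : V × Dual ℝ V} (ha : a ∈ L) (hb : b ∈ L) :
    gpair a b = 0 :=
  (hL.symm ▸ ha : a ∈ gperp L) b hb

theorem zero_mk_mem_iff (hL : IsLagrangian L) {η : Dual ℝ V} :
    ((0 : V), η) ∈ L ↔ η ∈ (L.map (fst ℝ V (Dual ℝ V))).dualAnnihilator := by
  rw [mem_dualAnnihilator]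
  constructor
  · rintro h - ⟨b, hb, rfl⟩
    simpa using hL.gpair_eq_zero h hb
  · intro h
    rw [← hL]
    intro b hb
    simpa using h b.1 ⟨b, hb, rfl⟩

end IsLagrangian

variable {φ : V →ₗ[ℝ] W} {L : Submodule ℝ (W × Dual ℝ W)}

theorem back_le_gperp_back (hL : L ≤ gperp L) : back φ L ≤ gperp (back φ L) := by
  rintro ⟨u, -⟩ ⟨η, hη, rfl⟩ ⟨u', -⟩ ⟨η', hη', rfl⟩
  rw [gpair_comp]
  exact hL hη _ hη'

theorem gperp_back_le_back (hL : IsLagrangian L) : gperp (back φ L) ≤ back φ L := by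
  rintro ⟨v, α⟩ hv
  rw [mem_gperp] at hv
  set P := L.map (fst ℝ W (Dual ℝ W))
  have hφv : φ v ∈ P := by
    rw [← Subspace.dualAnnihilator_dualCoannihilator_eq (W := P), mem_dualCoannihilator]
    intro η hη
    simpa using hv ((0 : V), η ∘ₗ φ) ⟨η, by simpa using hL.zero_mk_mem_iff.2 hη, rfl⟩
  obtain ⟨⟨-, η₀⟩, hη₀, rfl⟩ := hφv
  have hα : α - η₀ ∘ₗ φ ∈ (P.comap φ).dualAnnihilator := by
    rw [mem_dualAnnihilator]
    rintro u ⟨⟨w, ζ⟩, hζ, hw⟩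
    obtain rfl : w = φ u := hw
    have h₁ := hv (u, ζ ∘ₗ φ) ⟨ζ, hζ, rfl⟩
    have h₂ := hL.gpair_eq_zero hη₀ hζ
    simp only [gpair_apply, comp_apply, LinearMap.sub_apply] at h₁ h₂ ⊢
    linarith
  rw [Subspace.dualAnnihilator_comap_eq_map_dualMap] at hα
  obtain ⟨ζ, hζ, hζα⟩ := hα
  refine ⟨η₀ + ζ, ?_, ?_⟩
  · simpa using L.add_mem hη₀ (hL.zero_mk_mem_iff.2 hζ)
  · change α = (η₀ + ζ) ∘ₗ φ
    rw [add_comp, ← dualMap_apply' φ ζ, hζα, add_sub_cancel]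

theorem stmt3_general (φ : V →ₗ[ℝ] W) (L : Submodule ℝ (W × Module.Dual ℝ W))
    (hL : IsLagrangian L) :
    IsLagrangian (back φ L) :=
  le_antisymm (gperp_back_le_back hL) (back_le_gperp_back hL.ge)

theorem stmt3 [FiniteDimensional ℝ V] [FiniteDimensional ℝ W]
    (φ : V →ₗ[ℝ] W) (L : Submodule ℝ (W × Module.Dual ℝ W))
    (hL : IsLagrangian L) :
    IsLagrangian (back φ L) :=
  stmt3_general φ L hL
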